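/- Consider the random directed multigraph model on N nodes with offspring PGF μ. For every M and k with 1 ≤ k ≤ M ≤ N, the probability of the event that the out-component of node 0 has exactly k nodes and is contained in {0,1,...,M-1} equals q_k · C(M-1,k-1) / C(N-1,k-1), where C(n,r) denotes the binomial coefficient. -/

import Mathlib

open scoped Classical

/-- The weight (probability) of a realization `g` of the random directed multigraph on
`N` nodes: independently for each node `u`, its out-degree `ℓ` is drawn from the pmf `p`,
and then `ℓ` out-neighbors are drawn independently uniformly from the `N - 1` nodes
other than `u` (with replacement). -/
noncomputable def graphWeight (N : ℕ) (p : ℕ → ℝ) (g : Fin N → List (Fin N)) : ℝ :=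
  ∏ u : Fin N,
    if ∀ v ∈ g u, v ≠ u then
      p (g u).length * (1 / ((N : ℝ) - 1)) ^ (g u).length
    else 0

/-- Probability of an event in the random directed multigraph model. -/
noncomputable def graphProb (N : ℕ) (p : ℕ → ℝ) (E : Set (Fin N → List (Fin N))) : ℝ :=
  ∑' g : Fin N → List (Fin N), Set.indicator E (graphWeight N p) g

/-- The out-component of node `0`: the set of nodes reachable from node `0`
(including node `0` itself) following directed edges. -/
def outComp (N : ℕ) (hN : 0 < N) (g : Fin N → List (Fin N)) : Set (Fin N) :=
  {v | Relation.ReflTransGen (fun a b => b ∈ g a) ⟨0, hN⟩ v}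

/-- `qProb N hN p k` is the probability that the out-component of node `0` has exactly
`k` nodes. -/
noncomputable def qProb (N : ℕ) (hN : 0 < N) (p : ℕ → ℝ) (k : ℕ) : ℝ :=
  graphProb N p {g | (outComp N hN g).ncard = k}

/-!
Relabelling the nodes by a permutation `σ` fixing `0` preserves the law of the graph and maps
the out-component of `0` to its image under `σ`. Hence the mass of the event "the out-component
is `S`" is the same for all sets `S ∋ 0` of a given size `k`, say `c_k`. The event "size `k`,
contained in `t`" is the disjoint union of these events over the `(#t - 1).choose (k - 1)` sets
`S ⊆ t` of size `k` containing `0`, so its probability is `(#t - 1).choose (k - 1) * c_k`;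
comparing `t = {0, …, M - 1}` with `t = univ` gives the ratio.
-/

open Finset
open scoped ENNReal

theorem Equiv.Perm.exists_fixing_map_finset_eq {α : Type*} [DecidableEq α] {s t : Finset α}
    {a : α} (hs : a ∈ s) (ht : a ∈ t) (h : #s = #t) :
    ∃ σ : Equiv.Perm α, σ a = a ∧ s.map σ.toEmbedding = t := by
  let e : s ≃ t :=
    (s.equivOfCardEq h).trans (Equiv.swap (s.equivOfCardEq h ⟨a, hs⟩) ⟨a, ht⟩)
  obtain ⟨σ, hσ⟩ := Equiv.Perm.exists_extending_pair (fun x : s => (x : α))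
    (fun x => (e x : α)) Subtype.val_injective (Subtype.val_injective.comp e.injective)
  refine ⟨σ, by simpa [e] using hσ ⟨a, hs⟩,
    eq_of_subset_of_card_le (fun b hb => ?_) (by simp [h])⟩
  obtain ⟨x, hx, rfl⟩ := mem_map.mp hb
  exact hσ ⟨x, hx⟩ ▸ (e ⟨x, hx⟩).2

theorem ENNReal.tsum_indicator_mem_eq_sum_tsum_fiber {α β : Type*} [DecidableEq β]
    (f : α → ℝ≥0∞) (φ : α → β) (s : Finset β) :
    ∑' a, {a | φ a ∈ s}.indicator f a = ∑ b ∈ s, ∑' a, {a | φ a = b}.indicator f a := by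
  rw [← Summable.tsum_finsetSum (fun _ _ => ENNReal.summable)]
  congr with a
  simp only [Set.indicator_apply, Set.mem_ofPred_eq, sum_ite_eq]

theorem tsum_indicator_fiber_congr_equiv {α β M : Type*} [AddCommMonoid M]
    [TopologicalSpace M] {f : α → M} {φ : α → β} (e : α ≃ α) (τ : β ≃ β) (hf : ∀ a, f (e a) = f a)
    (hφ : ∀ a, φ (e a) = τ (φ a)) (b : β) :
    ∑' a, {a | φ a = τ b}.indicator f a = ∑' a, {a | φ a = b}.indicator f a := by
  rw [← e.tsum_eq]
  congr with a
  simp only [Set.indicator_apply, Set.mem_ofPred_eq, hf, hφ, τ.apply_eq_iff_eq]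

variable {N : ℕ}

def relabel (σ : Equiv.Perm (Fin N)) : (Fin N → List (Fin N)) ≃ (Fin N → List (Fin N)) :=
  σ.arrowCongr (Equiv.listEquivOfEquiv σ)

theorem relabel_apply_apply (σ : Equiv.Perm (Fin N)) (g : Fin N → List (Fin N)) (u : Fin N) :
    relabel σ g (σ u) = (g u).map σ := by
  simp [relabel, Equiv.listEquivOfEquiv]

theorem mem_relabel {σ : Equiv.Perm (Fin N)} {g : Fin N → List (Fin N)} {a b : Fin N} :
    b ∈ relabel σ g a ↔ σ.symm b ∈ g (σ.symm a) := by
  simp [relabel, Equiv.listEquivOfEquiv, ← Equiv.eq_symm_apply]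

theorem graphWeight_relabel (p : ℕ → ℝ) (σ : Equiv.Perm (Fin N)) (g : Fin N → List (Fin N)) :
    graphWeight N p (relabel σ g) = graphWeight N p g := by
  unfold graphWeight
  refine (Equiv.prod_comp σ _).symm.trans (prod_congr rfl fun u _ => ?_)
  simp [relabel_apply_apply]

theorem reflTransGen_relabel_iff {σ : Equiv.Perm (Fin N)} {g : Fin N → List (Fin N)}
    {x y : Fin N} :
    Relation.ReflTransGen (fun a b => b ∈ relabel σ g a) (σ x) (σ y) ↔
      Relation.ReflTransGen (fun a b => b ∈ g a) x y := by
  constructor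
  · intro h
    simpa [Function.onFun] using
      Relation.ReflTransGen.lift (p := fun a b => b ∈ g a) σ.symm
        (fun a b hab => mem_relabel.mp hab) _ _ h
  · exact Relation.ReflTransGen.lift σ
      (fun a b hab => mem_relabel.mpr (by simpa using hab)) _ _

theorem outComp_relabel (hN : 0 < N) {σ : Equiv.Perm (Fin N)} (hσ : σ ⟨0, hN⟩ = ⟨0, hN⟩)
    (g : Fin N → List (Fin N)) : outComp N hN (relabel σ g) = σ '' outComp N hN g := by
  ext v
  obtain ⟨w, rfl⟩ := σ.surjective v
  rw [σ.injective.mem_set_image, outComp, Set.mem_ofPred_eq, ← hσ, reflTransGen_relabel_iff]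
  rfl

theorem toFinset_outComp_relabel (hN : 0 < N) {σ : Equiv.Perm (Fin N)}
    (hσ : σ ⟨0, hN⟩ = ⟨0, hN⟩) (g : Fin N → List (Fin N)) :
    (outComp N hN (relabel σ g)).toFinset = σ.finsetCongr (outComp N hN g).toFinset := by
  rw [outComp_relabel hN hσ, Set.toFinset_image, Equiv.finsetCongr_apply, map_eq_image]
  rfl

noncomputable def outCompMass (N : ℕ) (hN : 0 < N) (p : ℕ → ℝ) (S : Finset (Fin N)) : ℝ≥0∞ :=
  ∑' g, {g | (outComp N hN g).toFinset = S}.indicator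
    (fun g => ENNReal.ofReal (graphWeight N p g)) g

theorem outCompMass_eq_zero_of_notMem (hN : 0 < N) (p : ℕ → ℝ) {S : Finset (Fin N)}
    (hS : ⟨0, hN⟩ ∉ S) : outCompMass N hN p S = 0 := by
  refine ENNReal.tsum_eq_zero.2 fun g => Set.indicator_of_notMem (fun hg => hS ?_) _
  rw [← Set.mem_ofPred_eq.mp hg, Set.mem_toFinset]
  exact Relation.ReflTransGen.refl

theorem outCompMass_finsetCongr (hN : 0 < N) (p : ℕ → ℝ) {σ : Equiv.Perm (Fin N)}
    (hσ : σ ⟨0, hN⟩ = ⟨0, hN⟩) (S : Finset (Fin N)) :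
    outCompMass N hN p (σ.finsetCongr S) = outCompMass N hN p S :=
  tsum_indicator_fiber_congr_equiv (relabel σ) σ.finsetCongr
    (fun g => by rw [graphWeight_relabel]) (toFinset_outComp_relabel hN hσ) S

theorem outCompMass_eq_of_card_eq (hN : 0 < N) (p : ℕ → ℝ) {S T : Finset (Fin N)}
    (hS : ⟨0, hN⟩ ∈ S) (hT : ⟨0, hN⟩ ∈ T) (h : #S = #T) :
    outCompMass N hN p S = outCompMass N hN p T := by
  obtain ⟨σ, hσ, rfl⟩ := Equiv.Perm.exists_fixing_map_finset_eq hS hT h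
  rw [← Equiv.finsetCongr_apply, outCompMass_finsetCongr hN p hσ]

theorem tsum_indicator_outComp_mem_powersetCard (hN : 0 < N) (p : ℕ → ℝ) {k : ℕ}
    (hk : 1 ≤ k) {t S₀ : Finset (Fin N)} (ht : ⟨0, hN⟩ ∈ t) (hS₀ : ⟨0, hN⟩ ∈ S₀) (hcard : #S₀ = k) :
    ∑' g, {g | (outComp N hN g).toFinset ∈ t.powersetCard k}.indicator
        (fun g => ENNReal.ofReal (graphWeight N p g)) g =
      (#t - 1).choose (k - 1) * outCompMass N hN p S₀ := by
  rw [ENNReal.tsum_indicator_mem_eq_sum_tsum_fiber]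
  change ∑ S ∈ t.powersetCard k, outCompMass N hN p S = _
  rw [← sum_filter_of_ne (p := ({⟨0, hN⟩} ⊆ ·)) fun S _ h =>
      singleton_subset_iff.2 (not_not.1 (mt (outCompMass_eq_zero_of_notMem hN p) h)),
    sum_eq_card_nsmul (b := outCompMass N hN p S₀) fun S hS => ?_,
    card_filter_powersetCard_subset _ _ _ (singleton_subset_iff.2 ht) (by simpa using hk),
    card_singleton, nsmul_eq_mul]
  rw [mem_filter, mem_powersetCard, singleton_subset_iff] at hS
  exact outCompMass_eq_of_card_eq hN p hS.2 hS₀ (hS.1.2.trans hcard.symm)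

theorem graphWeight_nonneg {p : ℕ → ℝ} (hp0 : ∀ ℓ, 0 ≤ p ℓ) (g : Fin N → List (Fin N)) :
    0 ≤ graphWeight N p g := by
  refine prod_nonneg fun u _ => ?_
  split_ifs
  · have : (1 : ℝ) ≤ N := by exact_mod_cast u.pos
    exact mul_nonneg (hp0 _) (pow_nonneg (by simpa using this) _)
  · exact le_rfl

/- Masses are summed in `ℝ≥0∞`, where splitting into fibres needs no summability; `toReal` of
`⊤` agrees with the junk value `0` of a non-summable real `tsum`. -/
theorem graphProb_eq_toReal_tsum {p : ℕ → ℝ} (hp0 : ∀ ℓ, 0 ≤ p ℓ)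
    (E : Set (Fin N → List (Fin N))) :
    graphProb N p E =
      (∑' g, E.indicator (fun g => ENNReal.ofReal (graphWeight N p g)) g).toReal := by
  rw [ENNReal.tsum_toReal_eq fun g => by simp [Set.indicator_apply]; split_ifs <;> simp,
    graphProb]
  congr with g
  simp only [Set.indicator_apply]
  split_ifs
  exacts [(ENNReal.toReal_ofReal (graphWeight_nonneg hp0 g)).symm, rfl]

theorem graphProb_ncard_eq_and_subset (hN : 0 < N) {p : ℕ → ℝ} (hp0 : ∀ ℓ, 0 ≤ p ℓ) {k : ℕ}
    (hk : 1 ≤ k) {t S₀ : Finset (Fin N)} (ht : ⟨0, hN⟩ ∈ t) (hS₀ : ⟨0, hN⟩ ∈ S₀)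
    (hcard : #S₀ = k) :
    graphProb N p {g | (outComp N hN g).ncard = k ∧ outComp N hN g ⊆ ↑t} =
      (#t - 1).choose (k - 1) * (outCompMass N hN p S₀).toReal := by
  have hevent : {g | (outComp N hN g).ncard = k ∧ outComp N hN g ⊆ ↑t} =
      {g | (outComp N hN g).toFinset ∈ t.powersetCard k} := by
    ext g
    simp [Set.ncard_eq_toFinset_card', Set.toFinset_subset, and_comm]
  rw [graphProb_eq_toReal_tsum hp0, hevent,
    tsum_indicator_outComp_mem_powersetCard hN p hk ht hS₀ hcard, ENNReal.toReal_mul,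
    ENNReal.toReal_natCast]

theorem outcomponent_size_and_containment_probability
    (N : ℕ) (hN : 2 ≤ N) (p : ℕ → ℝ)
    (hp0 : ∀ ℓ, 0 ≤ p ℓ)
    (M k : ℕ) (hk1 : 1 ≤ k) (hkM : k ≤ M) (hMN : M ≤ N) :
    graphProb N p
      {g | (outComp N (by omega) g).ncard = k ∧
           (outComp N (by omega) g) ⊆ {v : Fin N | (v : ℕ) < M}} =
      qProb N (by omega) p k *
        (((M - 1).choose (k - 1) : ℝ) / ((N - 1).choose (k - 1) : ℝ)) := by
  have hN0 : 0 < N := by omega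
  obtain ⟨S₀, h0S₀, hS₀⟩ := exists_superset_card_eq (s := {(⟨0, hN0⟩ : Fin N)}) (n := k)
    (by simpa using hk1) (by simp; omega)
  rw [singleton_subset_iff] at h0S₀
  have hq : qProb N hN0 p k =
      (N - 1).choose (k - 1) * (outCompMass N hN0 p S₀).toReal := by
    simpa [qProb] using graphProb_ncard_eq_and_subset hN0 hp0 hk1 (mem_univ _) h0S₀ hS₀
  have hM : {v : Fin N | (v : ℕ) < M} = ↑({v | (v : ℕ) < M} : Finset (Fin N)) := by simp
  rw [hq, hM, graphProb_ncard_eq_and_subset hN0 hp0 hk1 (by simp; omega) h0S₀ hS₀,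
    Fin.card_filter_val_lt, min_eq_right hMN]
  have hchoose : ((N - 1).choose (k - 1) : ℝ) ≠ 0 := by
    exact_mod_cast (Nat.choose_pos (by omega)).ne'
  field_simp
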